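/- arXiv:1706.03390 — 3 statements merged into one kernel-verified Lean document; each statement's English description precedes it below -/
import Mathlib

section
/- For every nonempty set A ⊆ V of vertices of Q^n, the number of edges of Q^n with both endpoints in A is at most |A|·log₂|A| / 2; equivalently, the number of edges of Q^n joining A to V∖A is at least n·|A| − |A|·log₂|A|. -/
open scoped Classical

noncomputable section

/-- The vertex set of the `n`-dimensional hypercube: `{0,1}^n`. -/
abbrev Vtx (n : ℕ) := Fin n → Bool

/-- The `n`-dimensional hypercube graph `Q^n`: two vertices are adjacent iff they
differ in exactly one coordinate. -/
def cubeGraph (n : ℕ) : SimpleGraph (Vtx n) :=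
  SimpleGraph.fromRel (fun u v => hammingDist u v = 1)

/-- The number of edges of `G` with both endpoints in `A`. -/
def edgesWithin {V : Type*} (G : SimpleGraph V) (A : Finset V) : ℕ :=
  Nat.card {e : Sym2 V // e ∈ G.edgeSet ∧ ∀ x ∈ e, x ∈ A}

/-- The number of edges of `G` with one endpoint in `A` and the other outside `A`. -/
def edgesAcross {V : Type*} (G : SimpleGraph V) (A : Finset V) : ℕ :=
  Nat.card {e : Sym2 V // e ∈ G.edgeSet ∧ (∃ x ∈ e, x ∈ A) ∧ ∃ x ∈ e, x ∉ A}

/-!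
Let `D(A)` be the number of ordered pairs of adjacent vertices of `A`. It is twice the number of
edges inside `A`, and since `Q^n` is `n`-regular, `D(A)` plus the number of edges leaving `A` is
`n |A|`; so both inequalities follow from `D(A) ≤ |A| log₂ |A|`. Cutting `Q^(n+1)` along the first
coordinate into two copies of `Q^n` that meet `A` in `A₀` and `A₁` gives
`D(A) = D(A₀) + D(A₁) + 2 |A₀ ∩ A₁|`, and by induction it remains to check
`a log₂ a + b log₂ b + 2 min a b ≤ (a + b) log₂ (a + b)`. For `a ≤ b` this splits as
`a log₂ ((a + b) / a) ≥ a` and `b log₂ (1 + a / b) ≥ a`, the latter because `2 ^ t ≤ 1 + t`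
on `[0, 1]`.
-/

open Finset Real

lemma le_logb_two_one_add {t : ℝ} (h0 : 0 ≤ t) (h1 : t ≤ 1) : t ≤ logb 2 (1 + t) := by
  rw [le_logb_iff_rpow_le one_lt_two (by linarith)]
  simpa [one_add_one_eq_two] using
    rpow_one_add_le_one_add_mul_self (s := 1) (by norm_num) h0 h1

lemma mul_logb_add_mul_logb_add_two_mul_le {a b : ℝ} (ha : 0 ≤ a) (hab : a ≤ b) :
    a * logb 2 a + b * logb 2 b + 2 * a ≤ (a + b) * logb 2 (a + b) := by
  obtain rfl | ha := ha.eq_or_lt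
  · simp
  have hb : 0 < b := ha.trans_le hab
  have h_small : a ≤ a * logb 2 ((a + b) / a) := by
    have : 1 ≤ logb 2 ((a + b) / a) := by
      rw [le_logb_iff_rpow_le one_lt_two (by positivity), rpow_one, le_div_iff₀ ha]
      linarith
    exact le_mul_of_one_le_right ha.le this
  have h_large : a ≤ b * logb 2 ((a + b) / b) := by
    have : a / b ≤ logb 2 ((a + b) / b) := by
      rw [add_div, div_self hb.ne', add_comm]
      exact le_logb_two_one_add (by positivity) ((div_le_one hb).2 hab)
    rwa [div_le_iff₀' hb] at this
  rw [logb_div (by positivity) ha.ne'] at h_small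
  rw [logb_div (by positivity) hb.ne'] at h_large
  linarith

lemma mul_logb_add_mul_logb_add_two_mul_min_le {a b : ℝ} (ha : 0 ≤ a) (hb : 0 ≤ b) :
    a * logb 2 a + b * logb 2 b + 2 * min a b ≤ (a + b) * logb 2 (a + b) := by
  rcases le_total a b with hab | hba
  · simpa [min_eq_left hab] using mul_logb_add_mul_logb_add_two_mul_le ha hab
  · simpa [min_eq_right hba, add_comm] using mul_logb_add_mul_logb_add_two_mul_le hb hba

namespace SimpleGraph

variable {V : Type*} (G : SimpleGraph V) [DecidableRel G.Adj]

lemma card_interedges_eq_sum (s t : Finset V) :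
    #(G.interedges s t) = ∑ v ∈ s, #{w ∈ t | G.Adj v w} := by
  simp only [interedges_def, card_filter, sum_product]

variable [Fintype V] [DecidableEq V]

lemma card_interedges_add_card_interedges_compl_right (s t : Finset V) :
    #(G.interedges s t) + #(G.interedges s tᶜ) = ∑ v ∈ s, G.degree v := by
  simp only [card_interedges_eq_sum, ← sum_add_distrib, ← card_neighborFinset_eq_degree]
  refine sum_congr rfl fun v _ => ?_
  rw [← card_union_of_disjoint (disjoint_filter_filter disjoint_compl_right), ← filter_union,
    union_compl, neighborFinset_eq_filter]

lemma card_interedges_self_eq_two_mul_edgesWithin (s : Finset V) :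
    #(G.interedges s s) = 2 * edgesWithin G s := by
  rw [edgesWithin, Nat.card_eq_fintype_card, Fintype.card_subtype,
    card_eq_sum_card_fiberwise (f := fun p : V × V => s(p.1, p.2)), mul_comm, ← smul_eq_mul,
    ← sum_const]
  · refine sum_congr rfl fun e he => ?_
    induction e with
    | _ u v =>
    simp only [mem_filter, mem_univ, true_and, mem_edgeSet, Sym2.mem_iff] at he
    obtain ⟨huv, hs⟩ := he
    have : {p ∈ G.interedges s s | s(p.1, p.2) = s(u, v)} = {(u, v), (v, u)} := by
      ext ⟨x, y⟩
      simp only [mem_filter, mk_mem_interedges_iff, Sym2.eq_iff, mem_insert, mem_singleton,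
        Prod.mk.injEq]
      constructor
      · exact fun h => h.2
      · rintro (⟨rfl, rfl⟩ | ⟨rfl, rfl⟩)
        · exact ⟨⟨hs x (.inl rfl), hs y (.inr rfl), huv⟩, by tauto⟩
        · exact ⟨⟨hs x (.inr rfl), hs y (.inl rfl), huv.symm⟩, by tauto⟩
    rw [this, card_pair (by simp [huv.ne])]
  · rintro ⟨u, v⟩ h
    simp only [mem_coe, mem_interedges_iff] at h
    simp only [mem_coe, mem_filter, mem_univ, true_and, mem_edgeSet, Sym2.mem_iff]
    exact ⟨h.2.2, by rintro x (rfl | rfl) <;> simp [h.1, h.2.1]⟩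

lemma card_interedges_compl_eq_edgesAcross (s : Finset V) :
    #(G.interedges s sᶜ) = edgesAcross G s := by
  rw [edgesAcross, Nat.card_eq_fintype_card, Fintype.card_subtype]
  refine card_nbij (fun p => s(p.1, p.2)) ?_ ?_ ?_
  · rintro ⟨u, v⟩ h
    simp only [mem_coe, mem_interedges_iff, mem_compl] at h
    simp only [mem_coe, mem_filter, mem_univ, true_and, mem_edgeSet, Sym2.mem_iff]
    exact ⟨h.2.2, ⟨u, .inl rfl, h.1⟩, ⟨v, .inr rfl, h.2.1⟩⟩
  · rintro ⟨u, v⟩ huv ⟨x, y⟩ hxy h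
    simp only [mem_coe, mem_interedges_iff, mem_compl] at huv hxy
    rcases Sym2.eq_iff.1 h with h | ⟨rfl, rfl⟩
    · simpa using h
    · exact absurd huv.1 hxy.2.1
  · intro e he
    induction e with
    | _ u v =>
    simp only [mem_coe, mem_filter, mem_univ, true_and, mem_edgeSet, Sym2.mem_iff]
      at he
    obtain ⟨huv, ⟨x, hx, hxs⟩, ⟨y, hy, hys⟩⟩ := he
    rcases hx with rfl | rfl <;> rcases hy with rfl | rfl
    · exact absurd hxs hys
    · exact ⟨(x, y), by simp [mem_interedges_iff, hxs, hys, huv]⟩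
    · exact ⟨(x, y), by simp [mem_interedges_iff, hxs, hys, huv.symm, Sym2.eq_swap]⟩
    · exact absurd hxs hys

variable {G}

lemma IsRegularOfDegree.card_interedges_add_card_interedges_compl {d : ℕ}
    (hG : G.IsRegularOfDegree d) (s : Finset V) :
    #(G.interedges s s) + #(G.interedges s sᶜ) = d * #s := by
  rw [card_interedges_add_card_interedges_compl_right, sum_congr rfl fun v _ => hG v,
    sum_const, smul_eq_mul, mul_comm]

end SimpleGraph

lemma card_filter_fin_cons {α : Type*} [Fintype α] {n : ℕ} (P : (Fin (n + 1) → α) → Prop)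
    [DecidablePred P] : #{u | P u} = ∑ a, #{w : Fin n → α | P (Fin.cons a w)} := by
  simp only [card_filter]
  rw [← Fintype.sum_equiv (Fin.consEquiv fun _ => α) _ _ fun _ => rfl, Fintype.sum_prod_type]
  rfl

section Hypercube

variable {n : ℕ}

def flipAt (u : Vtx n) (i : Fin n) : Vtx n := Function.update u i (!u i)

lemma hammingDist_eq_one_iff {u v : Vtx n} : hammingDist u v = 1 ↔ ∃ i, v = flipAt u i := by
  simp only [hammingDist, card_eq_one, Finset.ext_iff, funext_iff, flipAt, mem_filter, mem_univ,
    true_and, mem_singleton, Function.update_apply]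
  refine exists_congr fun i => forall_congr' fun j => ?_
  rcases eq_or_ne j i with rfl | hj
  · cases u j <;> cases v j <;> simp
  · simp [hj, eq_comm]

lemma cubeGraph_adj {u v : Vtx n} : (cubeGraph n).Adj u v ↔ hammingDist u v = 1 := by
  rw [cubeGraph, SimpleGraph.fromRel_adj, hammingDist_comm v u, or_self, and_iff_right_iff_imp]
  rintro h rfl
  simp at h

lemma cubeGraph_adj_iff_exists_flipAt {u v : Vtx n} :
    (cubeGraph n).Adj u v ↔ ∃ i, v = flipAt u i := by
  rw [cubeGraph_adj, hammingDist_eq_one_iff]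

lemma flipAt_injective (u : Vtx n) : Function.Injective (flipAt u) := by
  intro i j hij
  by_contra hne
  have := congrFun hij i
  simp [flipAt, Function.update_of_ne hne] at this

lemma neighborFinset_cubeGraph (u : Vtx n) :
    (cubeGraph n).neighborFinset u = univ.image (flipAt u) := by
  ext v
  simp [cubeGraph_adj_iff_exists_flipAt, eq_comm]

lemma cubeGraph_isRegularOfDegree : (cubeGraph n).IsRegularOfDegree n := by
  intro u
  rw [← SimpleGraph.card_neighborFinset_eq_degree, neighborFinset_cubeGraph,
    card_image_of_injective _ (flipAt_injective u), card_univ, Fintype.card_fin]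

lemma card_interedges_cubeGraph_self (A : Finset (Vtx n)) :
    #((cubeGraph n).interedges A A) = ∑ i, #{u ∈ A | flipAt u i ∈ A} := by
  have (u : Vtx n) : #{v ∈ A | (cubeGraph n).Adj u v} = #{i | flipAt u i ∈ A} := by
    rw [← card_image_of_injective _ (flipAt_injective u)]
    congr 1
    ext v
    simp only [mem_filter, mem_image, mem_univ, true_and, cubeGraph_adj_iff_exists_flipAt]
    grind
  simp only [SimpleGraph.card_interedges_eq_sum, this, card_filter]
  exact sum_comm

def cubeSlice (A : Finset (Vtx (n + 1))) (b : Bool) : Finset (Vtx n) := {w | Fin.cons b w ∈ A}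

@[simp] lemma mem_cubeSlice {A : Finset (Vtx (n + 1))} {b : Bool} {w : Vtx n} :
    w ∈ cubeSlice A b ↔ Fin.cons b w ∈ A := by
  simp [cubeSlice]

lemma flipAt_cons_zero (b : Bool) (w : Vtx n) :
    flipAt (Fin.cons b w : Vtx (n + 1)) 0 = Fin.cons (!b) w := by
  simp [flipAt, Fin.update_cons_zero]

lemma flipAt_cons_succ (b : Bool) (w : Vtx n) (j : Fin n) :
    flipAt (Fin.cons b w : Vtx (n + 1)) j.succ = Fin.cons b (flipAt w j) := by
  simp [flipAt, Fin.cons_update]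

lemma card_filter_eq_cubeSlice (A : Finset (Vtx (n + 1))) (P : Vtx (n + 1) → Prop)
    [DecidablePred P] :
    #{u ∈ A | P u} = #{w ∈ cubeSlice A false | P (Fin.cons false w)}
      + #{w ∈ cubeSlice A true | P (Fin.cons true w)} := by
  rw [← filter_univ_mem A, filter_filter, card_filter_fin_cons, Fintype.sum_bool, add_comm]
  simp only [cubeSlice, filter_filter, filter_univ_mem]

lemma card_cubeSlice_add_card_cubeSlice (A : Finset (Vtx (n + 1))) :
    #(cubeSlice A false) + #(cubeSlice A true) = #A := by
  simpa using (card_filter_eq_cubeSlice A fun _ => True).symm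

lemma card_filter_flipAt_zero (A : Finset (Vtx (n + 1))) :
    #{u ∈ A | flipAt u 0 ∈ A} = 2 * #(cubeSlice A false ∩ cubeSlice A true) := by
  rw [card_filter_eq_cubeSlice, two_mul]
  simp only [flipAt_cons_zero, Bool.not_false, Bool.not_true, ← mem_cubeSlice]
  rw [filter_mem_eq_inter, filter_mem_eq_inter, inter_comm (cubeSlice A true)]

lemma card_filter_flipAt_succ (A : Finset (Vtx (n + 1))) (j : Fin n) :
    #{u ∈ A | flipAt u j.succ ∈ A} = #{w ∈ cubeSlice A false | flipAt w j ∈ cubeSlice A false}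
      + #{w ∈ cubeSlice A true | flipAt w j ∈ cubeSlice A true} := by
  simp only [card_filter_eq_cubeSlice, flipAt_cons_succ, mem_cubeSlice]

lemma card_interedges_cubeGraph_self_succ (A : Finset (Vtx (n + 1))) :
    #((cubeGraph (n + 1)).interedges A A) =
      #((cubeGraph n).interedges (cubeSlice A false) (cubeSlice A false))
      + #((cubeGraph n).interedges (cubeSlice A true) (cubeSlice A true))
      + 2 * #(cubeSlice A false ∩ cubeSlice A true) := by
  simp only [card_interedges_cubeGraph_self, Fin.sum_univ_succ, card_filter_flipAt_zero,
    card_filter_flipAt_succ, sum_add_distrib]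
  ring

end Hypercube

lemma card_interedges_cubeGraph_self_le {n : ℕ} (A : Finset (Vtx n)) :
    (#((cubeGraph n).interedges A A) : ℝ) ≤ #A * logb 2 #A := by
  induction n with
  | zero =>
    rw [card_interedges_cubeGraph_self, Fin.sum_univ_zero, Nat.cast_zero]
    exact mul_nonneg (Nat.cast_nonneg _) (div_nonneg (log_natCast_nonneg _) (log_nonneg one_le_two))
  | succ n ih =>
    set A₀ := cubeSlice A false
    set A₁ := cubeSlice A true
    have h_inter : (#(A₀ ∩ A₁) : ℝ) ≤ min (#A₀ : ℝ) #A₁ := by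
      exact_mod_cast le_min (card_le_card inter_subset_left) (card_le_card inter_subset_right)
    have h_log := mul_logb_add_mul_logb_add_two_mul_min_le (Nat.cast_nonneg (α := ℝ) #A₀)
      (Nat.cast_nonneg #A₁)
    rw [card_interedges_cubeGraph_self_succ, ← card_cubeSlice_add_card_cubeSlice A]
    push_cast
    linarith [ih A₀, ih A₁]

theorem stmt_6_general (n : ℕ) (A : Finset (Vtx n)) :
    (edgesWithin (cubeGraph n) A : ℝ) ≤ (A.card : ℝ) * Real.logb 2 (A.card) / 2 ∧
    (n : ℝ) * (A.card : ℝ) - (A.card : ℝ) * Real.logb 2 (A.card)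
      ≤ (edgesAcross (cubeGraph n) A : ℝ) := by
  have h_within := (cubeGraph n).card_interedges_self_eq_two_mul_edgesWithin A
  have h_across := (cubeGraph n).card_interedges_compl_eq_edgesAcross A
  have h_sum := cubeGraph_isRegularOfDegree.card_interedges_add_card_interedges_compl A
  have h_le := card_interedges_cubeGraph_self_le A
  rw [h_within] at h_le h_sum
  rw [h_across] at h_sum
  have h_sum' : (2 * edgesWithin (cubeGraph n) A + edgesAcross (cubeGraph n) A : ℝ) =
      n * #A := by
    exact_mod_cast h_sum
  push_cast at h_le
  constructor <;> linarith

/-- Isoperimetric inequality for the hypercube: for every nonempty `A ⊆ V(Q^n)`,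
the number of edges of `Q^n` inside `A` is at most `|A|·log₂|A|/2`; equivalently,
the number of edges of `Q^n` joining `A` to its complement is at least
`n·|A| − |A|·log₂|A|`. -/
theorem stmt_6 (n : ℕ) (A : Finset (Vtx n)) (hA : A.Nonempty) :
    (edgesWithin (cubeGraph n) A : ℝ) ≤ (A.card : ℝ) * Real.logb 2 (A.card) / 2 ∧
    (n : ℝ) * (A.card : ℝ) - (A.card : ℝ) * Real.logb 2 (A.card)
      ≤ (edgesAcross (cubeGraph n) A : ℝ) :=
  stmt_6_general n A
end
end

section
/- Let each vertex v of Q^n independently choose a uniformly random neighbour f(v). Then the probability that there exists a vertex v such that the n² + 1 vertices v, f(v), f²(v), …, f^{n²}(v) are pairwise distinct tends to 0 as n → ∞; equivalently, w.h.p. the functional digraph with arcs (v, f(v)) contains no directed path of length greater than n². -/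
/-!
Fix a start vertex `v`, write `x_i` for the `i`-th iterate of `v` under the chosen map and let
`d` bound the degrees. Among the choices for which `x_0, …, x_{m+1}` are distinct, redirecting
the choice at `x_{m+1}` back to `x_m` fixes `x_0, …, x_{m+1}` but makes `x_{m+2} = x_m`, and this
switching map is at most `d`-to-one. Hence each further step stays injective with conditional
probability at most `1 - 1/d`. In `Q^n` an injective orbit of length `n²` from `v` therefore has
probability at most `(1 - 1/n)^(n² - 1) ≤ e^{-(n-1)}`, and a union bound over the `2^n` start
vertices gives at most `2 (2/e)^(n-1) → 0`.
-/

open scoped Classical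
open Filter

noncomputable section

/-- Sample space: every vertex independently chooses a uniformly random neighbour. -/
abbrev NbrChoice (n : ℕ) := ∀ v : Vtx n, {u : Vtx n // (cubeGraph n).Adj v u}

/-- Uniform (counting) probability of an event on a finite sample space. -/
def prob {Ω : Type*} [Finite Ω] (p : Ω → Prop) : ℝ :=
  (Nat.card {ω : Ω // p ω} : ℝ) / (Nat.card Ω : ℝ)

open Finset Function Real

section Orbit

variable {α : Type*} {f g : α → α} {v : α} {k : ℕ}

def OrbitInjective (f : α → α) (v : α) (k : ℕ) : Prop :=
  Injective fun i : Fin (k + 1) => f^[i] v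

lemma iterate_apply_eq_of_agree_on_orbit (h : ∀ i < k, g (f^[i] v) = f (f^[i] v)) :
    ∀ i ≤ k, g^[i] v = f^[i] v
  | 0, _ => rfl
  | i + 1, hi => by
    rw [iterate_succ_apply', iterate_succ_apply',
      iterate_apply_eq_of_agree_on_orbit h i (by omega), h i hi]

namespace OrbitInjective

lemma of_succ (h : OrbitInjective f v (k + 1)) : OrbitInjective f v k :=
  h.comp (Fin.castSucc_injective _)

lemma iterate_ne (h : OrbitInjective f v k) {i : ℕ} (hi : i < k) : f^[i] v ≠ f^[k] v :=
  fun he => hi.ne (congrArg Fin.val (@h ⟨i, by omega⟩ ⟨k, by omega⟩ he))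

lemma congr (h : OrbitInjective f v k) (hfg : ∀ i < k, g (f^[i] v) = f (f^[i] v)) :
    OrbitInjective g v k := by
  have horbit : (fun i : Fin (k + 1) => g^[i] v) = fun i : Fin (k + 1) => f^[i] v :=
    funext fun i => iterate_apply_eq_of_agree_on_orbit hfg i i.is_le
  rw [OrbitInjective, horbit]
  exact h

end OrbitInjective

end Orbit

section UniformProbability

variable {Ω : Type*} [Fintype Ω]

lemma prob_eq_card_filter_div (p : Ω → Prop) [DecidablePred p] :
    prob p = #{ω | p ω} / Fintype.card Ω := by
  rw [prob, Nat.card_eq_fintype_card, Nat.card_eq_fintype_card, Fintype.card_subtype]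

lemma prob_nonneg (p : Ω → Prop) : 0 ≤ prob p := by
  rw [prob]
  positivity

lemma prob_le_one (p : Ω → Prop) : prob p ≤ 1 := by
  rw [prob]
  exact div_le_one_of_le₀ (by exact_mod_cast Finite.card_subtype_le p) (Nat.cast_nonneg _)

lemma prob_exists_le {ι : Type*} [Fintype ι] (p : ι → Ω → Prop) :
    prob (fun ω => ∃ i, p i ω) ≤ ∑ i, prob (p i) := by
  simp only [prob_eq_card_filter_div, ← sum_div]
  gcongr
  have hunion : #{ω | ∃ i, p i ω} ≤ ∑ i, #{ω | p i ω} :=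
    (card_le_card fun ω hω => by simpa using hω).trans card_biUnion_le
  exact_mod_cast hunion

end UniformProbability

namespace SimpleGraph

variable {V : Type*} {G : SimpleGraph V}

abbrev NeighborChoice (G : SimpleGraph V) := ∀ a, {u // G.Adj a u}

def choiceMap (ω : G.NeighborChoice) : V → V := fun a => ω a

def backtrack (ω : G.NeighborChoice) (v : V) (m : ℕ) : G.NeighborChoice :=
  update ω (ω ((choiceMap ω)^[m] v)) ⟨(choiceMap ω)^[m] v, (ω _).2.symm⟩

section Backtrack

variable {ω ω' : G.NeighborChoice} {v : V} {m : ℕ}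

lemma choiceMap_backtrack_of_lt (h : OrbitInjective (choiceMap ω) v (m + 1)) {i : ℕ}
    (hi : i < m + 1) :
    choiceMap (backtrack ω v m) ((choiceMap ω)^[i] v) = choiceMap ω ((choiceMap ω)^[i] v) := by
  have hne : (choiceMap ω)^[i] v ≠ ω ((choiceMap ω)^[m] v) := by
    have := h.iterate_ne hi
    rwa [iterate_succ_apply'] at this
  simp [choiceMap, backtrack, update_of_ne hne]

lemma iterate_backtrack (h : OrbitInjective (choiceMap ω) v (m + 1)) :
    ∀ i ≤ m + 1, (choiceMap (backtrack ω v m))^[i] v = (choiceMap ω)^[i] v :=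
  iterate_apply_eq_of_agree_on_orbit fun _ hi => choiceMap_backtrack_of_lt h hi

lemma orbitInjective_backtrack (h : OrbitInjective (choiceMap ω) v (m + 1)) :
    OrbitInjective (choiceMap (backtrack ω v m)) v (m + 1) :=
  h.congr fun _ hi => choiceMap_backtrack_of_lt h hi

lemma not_orbitInjective_backtrack (h : OrbitInjective (choiceMap ω) v (m + 1)) :
    ¬ OrbitInjective (choiceMap (backtrack ω v m)) v (m + 2) := by
  set f := choiceMap (backtrack ω v m)
  intro h'
  apply h'.iterate_ne (show m < m + 2 by omega)
  calc f^[m] v = (choiceMap ω)^[m] v := iterate_backtrack h m (by omega)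
    _ = f (ω ((choiceMap ω)^[m] v)) := by simp [f, choiceMap, backtrack]
    _ = f ((choiceMap ω)^[m + 1] v) := by rw [iterate_succ_apply']; rfl
    _ = f (f^[m + 1] v) := by rw [iterate_backtrack h (m + 1) le_rfl]
    _ = f^[m + 2] v := (iterate_succ_apply' f (m + 1) v).symm

lemma eq_of_backtrack_eq (h : OrbitInjective (choiceMap ω) v (m + 1))
    (h' : OrbitInjective (choiceMap ω') v (m + 1)) (hb : backtrack ω v m = backtrack ω' v m)
    (hnext : ω ((choiceMap ω)^[m + 1] v) = ω' ((choiceMap ω)^[m + 1] v)) : ω = ω' := by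
  have horbit : ∀ i ≤ m + 1, (choiceMap ω)^[i] v = (choiceMap ω')^[i] v := fun i hi => by
    rw [← iterate_backtrack h i hi, ← iterate_backtrack h' i hi, hb]
  have hx : (choiceMap ω)^[m + 1] v = ω ((choiceMap ω)^[m] v) := iterate_succ_apply' _ _ _
  have hx' : (choiceMap ω)^[m + 1] v = ω' ((choiceMap ω')^[m] v) := by
    rw [horbit (m + 1) le_rfl]
    exact iterate_succ_apply' _ _ _
  funext b
  by_cases hbx : b = (choiceMap ω)^[m + 1] v
  · rw [hbx, hnext]
  · have := congrFun hb b
    rwa [backtrack, backtrack, update_of_ne (hx ▸ hbx), update_of_ne (hx' ▸ hbx)] at this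

end Backtrack

variable [Fintype V] {d : ℕ}

lemma card_filter_orbitInjective_le_mul (hd : ∀ a, G.degree a ≤ d) (v : V) (m : ℕ) :
    #{ω : G.NeighborChoice | OrbitInjective (choiceMap ω) v (m + 1)} ≤
      d * #{ω : G.NeighborChoice | OrbitInjective (choiceMap ω) v (m + 1) ∧
        ¬ OrbitInjective (choiceMap ω) v (m + 2)} := by
  refine card_le_mul_card_image_of_maps_to (f := fun ω => backtrack ω v m) ?_ d ?_
  · intro ω hω
    simp only [mem_filter, mem_univ, true_and] at hω ⊢
    exact ⟨orbitInjective_backtrack hω, not_orbitInjective_backtrack hω⟩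
  · intro η _
    set a := (choiceMap η)^[m + 1] v
    calc #{ω ∈ {ω | OrbitInjective (choiceMap ω) v (m + 1)} | backtrack ω v m = η}
        ≤ #(univ : Finset {u // G.Adj a u}) := by
          refine card_le_card_of_injOn (fun ω => ω a) (fun _ _ => mem_univ _) ?_
          intro ω hω ω' hω' hωa
          simp only [coe_filter, mem_filter, mem_univ, true_and] at hω hω'
          obtain ⟨hω, rfl⟩ := hω
          have ha : a = (choiceMap ω)^[m + 1] v := iterate_backtrack hω (m + 1) le_rfl
          exact eq_of_backtrack_eq hω hω'.1 hω'.2.symm (ha ▸ hωa)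
      _ = G.degree a := by
          rw [card_univ, Fintype.card_subtype, ← neighborFinset_eq_filter,
            card_neighborFinset_eq_degree]
      _ ≤ d := hd a

lemma prob_orbitInjective_succ_le (hd₀ : 0 < d) (hd : ∀ a, G.degree a ≤ d) (v : V) (m : ℕ) :
    prob (fun ω : G.NeighborChoice => OrbitInjective (choiceMap ω) v (m + 2)) ≤
      (1 - (d : ℝ)⁻¹) *
        prob (fun ω : G.NeighborChoice => OrbitInjective (choiceMap ω) v (m + 1)) := by
  have hswitch := card_filter_orbitInjective_le_mul hd v m
  have hsplit := card_filter_add_card_filter_not (s := univ.filter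
    fun ω : G.NeighborChoice => OrbitInjective (choiceMap ω) v (m + 1))
    fun ω => OrbitInjective (choiceMap ω) v (m + 2)
  rw [filter_filter, filter_filter,
    filter_congr fun ω _ => and_iff_right_of_imp OrbitInjective.of_succ] at hsplit
  rw [prob_eq_card_filter_div, prob_eq_card_filter_div, ← mul_div_assoc]
  gcongr
  set E₁ := #{ω : G.NeighborChoice | OrbitInjective (choiceMap ω) v (m + 1)}
  set B := #{ω : G.NeighborChoice | OrbitInjective (choiceMap ω) v (m + 1) ∧
    ¬ OrbitInjective (choiceMap ω) v (m + 2)}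
  have hB : (d : ℝ)⁻¹ * E₁ ≤ B := by
    rw [inv_mul_le_iff₀ (by exact_mod_cast hd₀)]
    exact_mod_cast hswitch
  have hsplit' : (#{ω : G.NeighborChoice | OrbitInjective (choiceMap ω) v (m + 2)} : ℝ) + B =
      E₁ := by exact_mod_cast hsplit
  rw [sub_mul, one_mul]
  linarith

lemma prob_orbitInjective_le (hd₀ : 0 < d) (hd : ∀ a, G.degree a ≤ d) (v : V) :
    ∀ m : ℕ, prob (fun ω : G.NeighborChoice => OrbitInjective (choiceMap ω) v (m + 1)) ≤
      (1 - (d : ℝ)⁻¹) ^ m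
  | 0 => by simpa using prob_le_one _
  | m + 1 => by
    have hq : 0 ≤ 1 - (d : ℝ)⁻¹ :=
      sub_nonneg.2 (inv_le_one_of_one_le₀ (by exact_mod_cast hd₀))
    calc _ ≤ (1 - (d : ℝ)⁻¹) * prob (fun ω : G.NeighborChoice =>
            OrbitInjective (choiceMap ω) v (m + 1)) := prob_orbitInjective_succ_le hd₀ hd v m
      _ ≤ (1 - (d : ℝ)⁻¹) * (1 - (d : ℝ)⁻¹) ^ m :=
          mul_le_mul_of_nonneg_left (prob_orbitInjective_le hd₀ hd v m) hq
      _ = (1 - (d : ℝ)⁻¹) ^ (m + 1) := (pow_succ' _ _).symm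

theorem prob_exists_orbitInjective_le (hd₀ : 0 < d) (hd : ∀ a, G.degree a ≤ d) (m : ℕ) :
    prob (fun ω : G.NeighborChoice => ∃ v, OrbitInjective (choiceMap ω) v (m + 1)) ≤
      Fintype.card V * (1 - (d : ℝ)⁻¹) ^ m :=
  calc _ ≤ ∑ v, prob (fun ω : G.NeighborChoice => OrbitInjective (choiceMap ω) v (m + 1)) :=
        prob_exists_le _
    _ ≤ ∑ _v : V, (1 - (d : ℝ)⁻¹) ^ m :=
        sum_le_sum fun v _ => prob_orbitInjective_le hd₀ hd v m
    _ = Fintype.card V * (1 - (d : ℝ)⁻¹) ^ m := by simp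

end SimpleGraph

lemma cubeGraph_degree_le (n : ℕ) (v : Vtx n) : (cubeGraph n).degree v ≤ n := by
  rw [← SimpleGraph.card_neighborFinset_eq_degree]
  calc #((cubeGraph n).neighborFinset v)
      ≤ #(powersetCard 1 (univ : Finset (Fin n))) := by
        refine card_le_card_of_injOn (fun u => ({i | v i ≠ u i} : Finset (Fin n)))
          (fun u hu => ?_) ?_
        · rw [mem_coe, SimpleGraph.mem_neighborFinset, cubeGraph, SimpleGraph.fromRel_adj,
            hammingDist_comm u v, or_self] at hu
          exact mem_coe.2 (mem_powersetCard.2 ⟨subset_univ _, hu.2⟩)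
        · intro u _ u' _ huu'
          funext i
          have hi := congrArg (i ∈ ·) huu'
          simp only [mem_filter, mem_univ, true_and] at hi
          revert hi
          cases v i <;> cases u i <;> cases u' i <;> simp
    _ = n := by simp

lemma one_sub_inv_pow_sq_sub_one_le (n : ℕ) :
    (1 - (n : ℝ)⁻¹) ^ (n ^ 2 - 1) ≤ exp (-1) ^ (n - 1) := by
  rcases Nat.eq_zero_or_pos n with rfl | hn
  · simp
  have h₀ : 0 ≤ 1 - (n : ℝ)⁻¹ :=
    sub_nonneg.2 (inv_le_one_of_one_le₀ (by exact_mod_cast hn))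
  calc (1 - (n : ℝ)⁻¹) ^ (n ^ 2 - 1)
      ≤ (1 - (n : ℝ)⁻¹) ^ (n * (n - 1)) := by
        refine pow_le_pow_of_le_one h₀ (by simp) ?_
        rw [Nat.mul_sub_one, sq]
        exact Nat.sub_le_sub_left hn _
    _ = ((1 - (n : ℝ)⁻¹) ^ n) ^ (n - 1) := pow_mul _ _ _
    _ ≤ exp (-1) ^ (n - 1) := by
        have hexp := one_sub_div_pow_le_exp_neg (n := n) (t := 1) (by exact_mod_cast hn)
        rw [one_div] at hexp
        exact pow_le_pow_left₀ (pow_nonneg h₀ _) hexp _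

lemma cubeGraph_prob_exists_orbitInjective_le {n : ℕ} (hn : 1 ≤ n) :
    prob (fun ω : NbrChoice n => ∃ v, OrbitInjective (SimpleGraph.choiceMap ω) v (n ^ 2)) ≤
      2 * (2 * exp (-1)) ^ (n - 1) := by
  rw [← Nat.sub_add_cancel (Nat.one_le_pow 2 n hn)]
  calc _ ≤ Fintype.card (Vtx n) * (1 - (n : ℝ)⁻¹) ^ (n ^ 2 - 1) :=
        SimpleGraph.prob_exists_orbitInjective_le hn (cubeGraph_degree_le n) _
    _ ≤ 2 ^ n * exp (-1) ^ (n - 1) := by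
        rw [show Fintype.card (Vtx n) = 2 ^ n by simp]
        push_cast
        gcongr
        exact one_sub_inv_pow_sq_sub_one_le n
    _ = 2 * (2 * exp (-1)) ^ (n - 1) := by
        obtain ⟨k, rfl⟩ := Nat.exists_eq_add_of_le' hn
        simp only [Nat.add_sub_cancel]
        ring

/-- Let each vertex `v` of `Q^n` independently choose a uniformly random neighbour
`f(v)`. The probability that some vertex `v` has the `n²+1` vertices
`v, f(v), …, f^{n²}(v)` pairwise distinct (i.e. the functional digraph has a
directed path of length greater than `n²`) tends to `0` as `n → ∞`. -/
theorem stmt_9 :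
    Tendsto (fun n : ℕ =>
        prob (fun ω : NbrChoice n =>
          ∃ v : Vtx n,
            Function.Injective (fun i : Fin (n ^ 2 + 1) =>
              (fun w : Vtx n => (ω w : Vtx n))^[(i : ℕ)] v)))
      atTop (nhds 0) := by
  have hratio : 2 * exp (-1) < 1 := by
    have : 2 < exp 1 := by linarith [add_one_lt_exp one_ne_zero]
    rwa [exp_neg, ← div_eq_mul_inv, div_lt_one (exp_pos 1)]
  have hlim : Tendsto (fun n : ℕ => 2 * (2 * exp (-1)) ^ (n - 1)) atTop (nhds 0) := by
    simpa using ((tendsto_pow_atTop_nhds_zero_of_lt_one (by positivity) hratio).comp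
      (tendsto_sub_atTop_nat 1)).const_mul 2
  refine squeeze_zero' (Eventually.of_forall fun n => prob_nonneg _) ?_ hlim
  filter_upwards [eventually_ge_atTop 1] with n hn
  exact cubeGraph_prob_exists_orbitInjective_le hn
end
end

section
/- Let k ≥ 1 be an integer and let S, L be disjoint subsets of the vertex set of Q^n with S nonempty and |L| ≤ k−1. If every vertex of S has at least k of its Q^n-neighbours in S ∪ L, then k·|S| ≤ (|S| + k)·log₂(|S| + k). -/
open scoped Classical

noncomputable section

lemma cube_adj {n : ℕ} {u v : Vtx n} :
    (cubeGraph n).Adj u v ↔ hammingDist u v = 1 := by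
  rw [cubeGraph, SimpleGraph.fromRel_adj]
  constructor
  · rintro ⟨hne, h | h⟩
    exacts [h, by rwa [hammingDist_comm]]
  · intro h
    exact ⟨fun he => by simp [he, hammingDist_self] at h, Or.inl h⟩

lemma hamming_cons {n : ℕ} (b c : Bool) (u v : Vtx n) :
    hammingDist (Fin.cons b u : Vtx (n+1)) (Fin.cons c v) =
      (if b = c then 0 else 1) + hammingDist u v := by
  unfold hammingDist
  rw [Finset.card_filter, Finset.card_filter, Fin.sum_univ_succ]
  simp only [Fin.cons_zero, Fin.cons_succ]
  congr 1
  by_cases h : b = c <;> simp [h]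

lemma adj_cons_same {n : ℕ} (b : Bool) (u v : Vtx n) :
    (cubeGraph (n+1)).Adj (Fin.cons b u) (Fin.cons b v) ↔ (cubeGraph n).Adj u v := by
  simp [cube_adj, hamming_cons]

lemma adj_cons_ne {n : ℕ} {b c : Bool} (h : b ≠ c) (u v : Vtx n) :
    (cubeGraph (n+1)).Adj (Fin.cons b u) (Fin.cons c v) ↔ u = v := by
  rw [cube_adj, hamming_cons, if_neg h]
  constructor
  · intro h'
    exact eq_of_hammingDist_eq_zero (by omega)
  · intro h'
    subst h'
    rw [hammingDist_self]

/-- Sum of (ordered) degrees within `A`. -/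
def degSum (n : ℕ) (A : Finset (Vtx n)) : ℕ :=
  ∑ v ∈ A, (A.filter (fun u => (cubeGraph n).Adj v u)).card

/-- The two "slices" of a subset of `Q^{n+1}`, as subsets of `Q^n`. -/
def projSet (n : ℕ) (A : Finset (Vtx (n+1))) (b : Bool) : Finset (Vtx n) :=
  Finset.univ.filter (fun u => Fin.cons b u ∈ A)


lemma cons_inj {n : ℕ} (b : Bool) :
    Function.Injective (fun u : Vtx n => (Fin.cons b u : Vtx (n+1))) := by
  intro u v h
  have h2 := congrArg Fin.tail h
  simpa [Fin.tail_cons] using h2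

lemma mem_projSet {n : ℕ} {A : Finset (Vtx (n+1))} {b : Bool} {u : Vtx n} :
    u ∈ projSet n A b ↔ Fin.cons b u ∈ A := by
  simp [projSet]

lemma proj_image (n : ℕ) (A : Finset (Vtx (n+1))) (b : Bool) :
    (projSet n A b).image (Fin.cons b) = A.filter (fun v => v 0 = b) := by
  ext v
  simp only [Finset.mem_image, Finset.mem_filter]
  constructor
  · rintro ⟨u, hu, rfl⟩
    exact ⟨mem_projSet.mp hu, by simp⟩
  · rintro ⟨hv, hb⟩
    have hc : Fin.cons b (Fin.tail v) = v := by
      rw [← hb]; exact Fin.cons_self_tail v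
    exact ⟨Fin.tail v, mem_projSet.mpr (by rw [hc]; exact hv), hc⟩

lemma card_side (n : ℕ) (A : Finset (Vtx (n+1))) (b : Bool) :
    (A.filter (fun v => v 0 = b)).card = (projSet n A b).card := by
  rw [← proj_image, Finset.card_image_of_injective _ (cons_inj b)]

lemma sum_side (n : ℕ) (A : Finset (Vtx (n+1))) (b : Bool) (f : Vtx (n+1) → ℕ) :
    ∑ v ∈ A.filter (fun v => v 0 = b), f v = ∑ u ∈ projSet n A b, f (Fin.cons b u) := by
  rw [← proj_image, Finset.sum_image]
  intro x _ y _ h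
  exact cons_inj b h

lemma cardA (n : ℕ) (A : Finset (Vtx (n+1))) :
    A.card = (projSet n A false).card + (projSet n A true).card := by
  rw [← card_side n A false, ← card_side n A true,
    ← Finset.card_filter_add_card_filter_not (s := A) (p := fun v => v 0 = false)]
  congr 1
  congr 1
  apply Finset.filter_congr
  intro v _
  cases hv : v 0 <;> simp [hv]

lemma same_side (n : ℕ) (A : Finset (Vtx (n+1))) (b : Bool) (u : Vtx n) :
    ((A.filter (fun v => v 0 = b)).filter
        (fun w => (cubeGraph (n+1)).Adj (Fin.cons b u) w)).card =
      ((projSet n A b).filter (fun w => (cubeGraph n).Adj u w)).card := by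
  rw [← proj_image, Finset.filter_image,
    Finset.card_image_of_injective _ (cons_inj b)]
  congr 1
  apply Finset.filter_congr
  intro w _
  exact adj_cons_same b u w

lemma cross_side (n : ℕ) (A : Finset (Vtx (n+1))) (b : Bool) (u : Vtx n) :
    ((A.filter (fun v => v 0 = !b)).filter
        (fun w => (cubeGraph (n+1)).Adj (Fin.cons b u) w)).card =
      if u ∈ projSet n A (!b) then 1 else 0 := by
  rw [← proj_image, Finset.filter_image,
    Finset.card_image_of_injective _ (cons_inj (!b))]
  have heq : (projSet n A (!b)).filter
      (fun w => (cubeGraph (n+1)).Adj (Fin.cons b u) (Fin.cons (!b) w)) =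
        (projSet n A (!b)).filter (fun w => u = w) := by
    apply Finset.filter_congr
    intro w _
    simpa using adj_cons_ne (show b ≠ !b by cases b <;> simp) u w
  rw [heq]
  have : (projSet n A (!b)).filter (fun w => u = w) = (projSet n A (!b)).filter (Eq u) := rfl
  rw [this, Finset.filter_eq]
  by_cases h : u ∈ projSet n A (!b)
  · rw [if_pos h, if_pos h, Finset.card_singleton]
  · rw [if_neg h, if_neg h, Finset.card_empty]

lemma deg_split (n : ℕ) (A : Finset (Vtx (n+1))) (p : Vtx (n+1) → Prop) :
    (A.filter p).card =
      ((A.filter (fun w => w 0 = false)).filter p).card +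
        ((A.filter (fun w => w 0 = true)).filter p).card := by
  have hu : (A.filter (fun w => w 0 = false)).filter p ∪
      (A.filter (fun w => w 0 = true)).filter p = A.filter p := by
    ext x
    simp only [Finset.mem_union, Finset.mem_filter]
    cases hx : x 0 <;> simp [hx] <;> tauto
  have hd : Disjoint ((A.filter (fun w => w 0 = false)).filter p)
      ((A.filter (fun w => w 0 = true)).filter p) := by
    rw [Finset.disjoint_left]
    intro x hx1 hx2
    simp only [Finset.mem_filter] at hx1 hx2
    have h1 := hx1.1.2
    have h2 := hx2.1.2
    rw [h1] at h2
    exact absurd h2 (by simp)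
  rw [← hu, Finset.card_union_of_disjoint hd]

lemma degSum_succ (n : ℕ) (A : Finset (Vtx (n+1))) :
    degSum (n+1) A =
      degSum n (projSet n A false) + degSum n (projSet n A true) +
        2 * ((projSet n A false) ∩ (projSet n A true)).card := by
  have hside : ∀ b : Bool,
      ∑ u ∈ projSet n A b,
          (A.filter (fun w => (cubeGraph (n+1)).Adj (Fin.cons b u) w)).card =
        degSum n (projSet n A b) + ((projSet n A b) ∩ (projSet n A (!b))).card := by
    intro b
    have hterm : ∀ u ∈ projSet n A b,
        (A.filter (fun w => (cubeGraph (n+1)).Adj (Fin.cons b u) w)).card =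
          ((projSet n A b).filter (fun w => (cubeGraph n).Adj u w)).card +
            (if u ∈ projSet n A (!b) then 1 else 0) := by
      intro u _
      rw [deg_split n A]
      cases b
      · rw [same_side n A false u]
        have := cross_side n A false u
        simp only [Bool.not_false] at this ⊢
        rw [this]
      · rw [same_side n A true u]
        have := cross_side n A true u
        simp only [Bool.not_true] at this ⊢
        rw [this, Nat.add_comm]
    have hs : ∑ u ∈ projSet n A b, (if u ∈ projSet n A (!b) then 1 else 0) =
        ((projSet n A b) ∩ (projSet n A (!b))).card := by
      rw [Finset.sum_ite_mem]
      simp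
    rw [Finset.sum_congr rfl hterm, Finset.sum_add_distrib, hs]
    rfl
  rw [show degSum (n+1) A =
      ∑ v ∈ A, (A.filter (fun u => (cubeGraph (n+1)).Adj v u)).card from rfl]
  rw [← Finset.sum_filter_add_sum_filter_not A (fun v => v 0 = false)]
  have hnot : A.filter (fun v => ¬ v 0 = false) = A.filter (fun v => v 0 = true) := by
    apply Finset.filter_congr
    intro v _
    cases hv : v 0 <;> simp [hv]
  rw [hnot, sum_side n A false, sum_side n A true, hside false, hside true]
  simp only [Bool.not_false, Bool.not_true]
  rw [Finset.inter_comm (projSet n A true) (projSet n A false)]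
  omega

lemma logb_one_add_ge {x : ℝ} (h0 : 0 ≤ x) (h1 : x ≤ 1) : x ≤ Real.logb 2 (1 + x) := by
  have h2 : (2:ℝ) ^ x ≤ 1 + x := by
    have hc := convexOn_exp.2 (Set.mem_univ (0:ℝ)) (Set.mem_univ (Real.log 2))
      (by linarith : (0:ℝ) ≤ 1 - x) h0 (by ring)
    simp only [smul_eq_mul, mul_zero, zero_add, Real.exp_zero,
      Real.exp_log (by norm_num : (0:ℝ) < 2)] at hc
    rw [Real.rpow_def_of_pos (by norm_num)]
    calc Real.exp (Real.log 2 * x) = Real.exp (x * Real.log 2) := by ring_nf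
      _ ≤ (1 - x) * 1 + x * 2 := hc
      _ = 1 + x := by ring
  calc x = Real.logb 2 ((2:ℝ) ^ x) :=
        (Real.logb_rpow (by norm_num) (by norm_num)).symm
    _ ≤ Real.logb 2 (1 + x) := by
        apply Real.logb_le_logb_of_le (by norm_num) _ h2
        positivity

lemma xlogx_ineq (a b : ℕ) (hab : a ≤ b) :
    (a:ℝ) * Real.logb 2 a + (b:ℝ) * Real.logb 2 b + 2*a ≤
      ((a:ℝ)+b) * Real.logb 2 ((a:ℝ)+b) := by
  rcases Nat.eq_zero_or_pos a with ha | ha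
  · subst ha; simp
  · have ha1 : (1:ℝ) ≤ (a:ℝ) := by exact_mod_cast ha
    have hb1 : (1:ℝ) ≤ (b:ℝ) := le_trans ha1 (by exact_mod_cast hab)
    have habR : (a:ℝ) ≤ (b:ℝ) := by exact_mod_cast hab
    have h1 : (a:ℝ) * Real.logb 2 a + a ≤ (a:ℝ) * Real.logb 2 ((a:ℝ)+b) := by
      have hle : Real.logb 2 (2*(a:ℝ)) ≤ Real.logb 2 ((a:ℝ)+b) :=
        Real.logb_le_logb_of_le (by norm_num) (by linarith) (by linarith)
      rw [Real.logb_mul (by norm_num) (by linarith),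
        Real.logb_self_eq_one (by norm_num)] at hle
      nlinarith
    have h2 : (b:ℝ) * Real.logb 2 b + a ≤ (b:ℝ) * Real.logb 2 ((a:ℝ)+b) := by
      have hx := logb_one_add_ge (x := (a:ℝ)/b) (by positivity)
        (by rw [div_le_one (by linarith)]; linarith)
      have heq : Real.logb 2 (1 + (a:ℝ)/b) = Real.logb 2 ((a:ℝ)+b) - Real.logb 2 b := by
        rw [show (1:ℝ) + (a:ℝ)/b = ((a:ℝ)+b)/b by field_simp; ring,
          Real.logb_div (by linarith) (by linarith)]
      rw [heq] at hx
      have hb0 : (0:ℝ) < b := by linarith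
      have hm := mul_le_mul_of_nonneg_left hx (le_of_lt hb0)
      rw [mul_div_cancel₀ _ (ne_of_gt hb0)] at hm
      nlinarith
    linarith

lemma degSum_le (n : ℕ) : ∀ (A : Finset (Vtx n)),
    (degSum n A : ℝ) ≤ A.card * Real.logb 2 A.card := by
  induction n with
  | zero =>
    intro A
    have hd : degSum 0 A = 0 := by
      apply Finset.sum_eq_zero
      intro v hv
      rw [Finset.card_eq_zero, Finset.filter_eq_empty_iff]
      intro u _ hadj
      exact hadj.ne (funext fun i => i.elim0)
    rw [hd]
    have hcard : A.card ≤ 1 := by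
      have h := Finset.card_le_univ A
      simpa using h
    rcases Nat.le_one_iff_eq_zero_or_eq_one.mp hcard with h | h <;> rw [h] <;> simp
  | succ n ih =>
    intro A
    have hmain := degSum_succ n A
    have hcardA := cardA n A
    set B0 := projSet n A false
    set B1 := projSet n A true
    have hminle : ((B0 ∩ B1).card : ℝ) ≤ min (B0.card : ℝ) (B1.card : ℝ) := by
      apply le_min
      · exact_mod_cast Finset.card_le_card Finset.inter_subset_left
      · exact_mod_cast Finset.card_le_card Finset.inter_subset_right
    have h0 := ih B0
    have h1 := ih B1
    have hkey : (B0.card:ℝ) * Real.logb 2 B0.card + (B1.card:ℝ) * Real.logb 2 B1.card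
        + 2 * (min (B0.card:ℝ) (B1.card:ℝ)) ≤
          ((B0.card:ℝ) + B1.card) * Real.logb 2 ((B0.card:ℝ) + B1.card) := by
      rcases le_total B0.card B1.card with h | h
      · have := xlogx_ineq B0.card B1.card h
        rw [min_eq_left (by exact_mod_cast h)]
        linarith
      · have hx := xlogx_ineq B1.card B0.card h
        rw [min_eq_right (by exact_mod_cast h)]
        have hc : ((B1.card:ℝ) + B0.card) = ((B0.card:ℝ) + B1.card) := by ring
        rw [hc] at hx
        linarith
    rw [hmain, hcardA]
    push_cast
    linarith

/-- Let `k ≥ 1` and let `S, L` be disjoint sets of vertices of `Q^n` with `S`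
nonempty and `|L| ≤ k−1`. If every vertex of `S` has at least `k` of its
`Q^n`-neighbours in `S ∪ L`, then `k·|S| ≤ (|S| + k)·log₂(|S| + k)`. -/
theorem stmt_15 (n k : ℕ) (hk : 1 ≤ k) (S L : Finset (Vtx n))
    (hSL : Disjoint S L) (hS : S.Nonempty) (hL : L.card ≤ k - 1)
    (hdeg : ∀ v ∈ S, k ≤ ((S ∪ L).filter (fun u => (cubeGraph n).Adj v u)).card) :
    (k : ℝ) * S.card ≤ ((S.card : ℝ) + k) * Real.logb 2 ((S.card : ℝ) + k) := by
  set A := S ∪ L with hA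
  have h1 : k * S.card ≤ degSum n A := by
    calc k * S.card = ∑ _v ∈ S, k := by rw [Finset.sum_const, smul_eq_mul, mul_comm]
      _ ≤ ∑ v ∈ S, (A.filter (fun u => (cubeGraph n).Adj v u)).card :=
          Finset.sum_le_sum hdeg
      _ ≤ ∑ v ∈ A, (A.filter (fun u => (cubeGraph n).Adj v u)).card :=
          Finset.sum_le_sum_of_subset Finset.subset_union_left
      _ = degSum n A := rfl
  have h2 : (degSum n A : ℝ) ≤ A.card * Real.logb 2 A.card := degSum_le n A
  have hAcard : A.card ≤ S.card + k := by
    have h := Finset.card_union_le S L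
    rw [← hA] at h
    omega
  have hA1 : 1 ≤ A.card :=
    Finset.card_pos.mpr (hS.mono Finset.subset_union_left)
  have h3 : (A.card : ℝ) * Real.logb 2 A.card ≤
      ((S.card : ℝ) + k) * Real.logb 2 ((S.card : ℝ) + k) := by
    have hc : (A.card : ℝ) ≤ (S.card : ℝ) + k := by exact_mod_cast hAcard
    have hA1R : (1:ℝ) ≤ (A.card : ℝ) := by exact_mod_cast hA1
    apply mul_le_mul hc
    · exact Real.logb_le_logb_of_le (by norm_num) (by linarith) hc
    · exact Real.logb_nonneg (by norm_num) hA1R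
    · linarith
  calc (k : ℝ) * S.card = ((k * S.card : ℕ) : ℝ) := by push_cast; ring
    _ ≤ (degSum n A : ℝ) := by exact_mod_cast h1
    _ ≤ (A.card : ℝ) * Real.logb 2 A.card := h2
    _ ≤ ((S.card : ℝ) + k) * Real.logb 2 ((S.card : ℝ) + k) := h3
end
end
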